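/- arXiv:1601.03477 — 2 statements merged into one kernel-verified Lean document; each statement's English description precedes it below -/
import Mathlib

section
/- Let P be a large-tree forcing notion, n < ω, T an n-collage over P, and D ⊆ P an open dense subset of P. Then there is an n-collage Q over P such that Q ⊆_n T and Q→s ∈ D for every s ∈ 2^n. -/
namespace E0L

/-- Finite binary strings `2^{<ω}`. -/
abbrev Str : Type := List Bool

/-- Sets of binary strings (in particular, trees). -/
abbrev Tr : Type := Set Str

/-- The action `s·t` of a string on a string:
`(s·t)(k) = t(k) + s(k) mod 2` for `k < min(|s|,|t|)` and `(s·t)(k) = t(k)` otherwise. -/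
def act (s t : Str) : Str := List.ofFn fun k : Fin t.length => Bool.xor (s.getD k false) (t.get k)

/-- The action `s·T` of a string on a set of strings. -/
def actT (s : Str) (T : Tr) : Tr := (act s) '' T

/-- `T ↾ s = {t ∈ T : s ⊆ t or t ⊆ s}`. -/
def restr (T : Tr) (s : Str) : Tr := {t ∈ T | s <+: t ∨ t <+: s}

/-- `[T]`, the set of infinite branches of `T` (as elements of Cantor space `2^ω`). -/
def branches (T : Tr) : Set (ℕ → Bool) := {x | ∀ n : ℕ, (List.ofFn fun k : Fin n => x k) ∈ T}

/-- `T[s] = {t : s ⊆ t or t ⊂ s}`. -/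
def Tbr (s : Str) : Tr := {t | s <+: t ∨ (t <+: s ∧ t ≠ s)}

/-- `LTwit T r q` : the strings `q i n` witness that `T` is an E0-large tree with stem `r`:
`|q^0_n| = |q^1_n| ≥ 1`, `q^i_n(0) = i`, and `T` consists of all initial segments of strings
of the form `r⌢q^{i(0)}_0⌢…⌢q^{i(n)}_n`. -/
def LTwit (T : Tr) (r : Str) (q : ℕ → Bool → Str) : Prop :=
  (∀ n : ℕ, (q n true).length = (q n false).length ∧ 1 ≤ (q n false).length) ∧
  (∀ n : ℕ, ∀ i : Bool, (q n i).head? = some i) ∧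
  T = {t | ∃ n : ℕ, ∃ f : ℕ → Bool,
        t <+: r ++ ((List.range (n+1)).map (fun k => q k (f k))).flatten}

/-- `T` is an E0-large tree (`T ∈ LT`). -/
def IsLT (T : Tr) : Prop := ∃ r q, LTwit T r q

/-- `stem T` : the longest `s ∈ T` with `T = T↾s`. -/
noncomputable def stem (T : Tr) : Str :=
  Classical.epsilon fun s => s ∈ T ∧ restr T s = T ∧ ∀ t ∈ T, restr T t = T → t.length ≤ s.length

/-- The canonical witness `(r, q)` of an E0-large tree. -/
noncomputable def witness (T : Tr) : Str × (ℕ → Bool → Str) :=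
  Classical.epsilon fun rq => LTwit T rq.1 rq.2

/-- Splitting levels computed from a witness: `spl_0 = |r|`, `spl_{n+1} = spl_n + |q^i_n|`. -/
def splN (r : Str) (q : ℕ → Bool → Str) : ℕ → ℕ
  | 0 => r.length
  | n+1 => splN r q n + (q n false).length

/-- `spl T n`, the `n`-th splitting level of an E0-large tree `T`. -/
noncomputable def spl (T : Tr) (n : ℕ) : ℕ := splN (witness T).1 (witness T).2 n

/-- Simple splitting `T→i = T↾(stem(T)⌢i)`. -/
noncomputable def split1 (T : Tr) (i : Bool) : Tr := restr T (stem T ++ [i])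

/-- Iterated splitting `T→s`: `T→Λ = T`, `T→(s⌢i) = (T→s)→i`. -/
noncomputable def splitS (T : Tr) (s : Str) : Tr := s.foldl split1 T

/-- `S ⊆_n T` : `S ⊆ T` and `spl_k(S) = spl_k(T)` for all `k < n`. -/
def subN (n : ℕ) (S T : Tr) : Prop := S ⊆ T ∧ ∀ k < n, spl S k = spl T k

/-- A large-tree forcing notion: a set of E0-large trees closed under restriction
and under the action of strings. -/
def IsLTF (P : Set Tr) : Prop :=
  (∀ T ∈ P, IsLT T) ∧
  (∀ T ∈ P, ∀ u ∈ T, restr T u ∈ P) ∧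
  (∀ T ∈ P, ∀ s : Str, actT s T ∈ P)

/-- `T` is an `n`-collage over `P`: `T ∈ LT` and `T→s ∈ P` for all `s ∈ 2^n`. -/
def IsCollage (P : Set Tr) (n : ℕ) (T : Tr) : Prop :=
  IsLT T ∧ ∀ s : Str, s.length = n → splitS T s ∈ P

/-- `D` is open dense in `P` (as a set of trees). -/
def OpenDense1 (P D : Set Tr) : Prop :=
  D ⊆ P ∧ (∀ S ∈ P, ∃ T ∈ D, T ⊆ S) ∧ (∀ S ∈ P, ∀ T ∈ D, S ⊆ T → S ∈ D)

/-- `⟨T,T'⟩` is a condition of the conditional product `P ×_{E0} P`. -/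
def CondPair (P : Set Tr) (p : Tr × Tr) : Prop :=
  p.1 ∈ P ∧ p.2 ∈ P ∧ ∃ s : Str, actT s p.1 = p.2

/-- Componentwise order on pairs of trees: `p ≤ q`. -/
def pleq (p q : Tr × Tr) : Prop := p.1 ⊆ q.1 ∧ p.2 ⊆ q.2

/-- Compatibility of two conditions in `P ×_{E0} P`. -/
def Compat (P : Set Tr) (p q : Tr × Tr) : Prop :=
  ∃ r : Tr × Tr, CondPair P r ∧ pleq r p ∧ pleq r q

/-- `D` is pre-dense in `P ×_{E0} P`. -/
def PreDense2 (P : Set Tr) (D : Set (Tr × Tr)) : Prop :=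
  ∀ p : Tr × Tr, CondPair P p → ∃ q ∈ D, Compat P p q

/-- `D` is open dense in `P ×_{E0} P`. -/
def OpenDense2 (P : Set Tr) (D : Set (Tr × Tr)) : Prop :=
  D ⊆ {p | CondPair P p} ∧
  (∀ p : Tr × Tr, CondPair P p → ∃ q ∈ D, pleq q p) ∧
  (∀ p : Tr × Tr, CondPair P p → ∀ q ∈ D, pleq p q → p ∈ D)

/-- A `P ×_{E0} P`-real name `c = ⟨C_n^i⟩`. -/
def IsRealName (P : Set Tr) (c : ℕ → Bool → Set (Tr × Tr)) : Prop :=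
  (∀ n : ℕ, ∀ i : Bool, c n i ⊆ {p | CondPair P p}) ∧
  (∀ n : ℕ, PreDense2 P (c n false ∪ c n true)) ∧
  (∀ n : ℕ, ∀ p ∈ c n false, ∀ q ∈ c n true, ¬ Compat P p q)

/-- `p` directly forces `c(n) = i`. -/
def DFVal (c : ℕ → Bool → Set (Tr × Tr)) (p : Tr × Tr) (n : ℕ) (i : Bool) : Prop :=
  ∃ q ∈ c n i, pleq p q

/-- `p` directly forces `s ⊂ c`. -/
def DFPrefix (c : ℕ → Bool → Set (Tr × Tr)) (p : Tr × Tr) (s : Str) : Prop :=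
  ∀ n < s.length, DFVal c p n (s.getD n false)

/-- `p` directly forces `c ∉ [U]`. -/
def DFAvoid (c : ℕ → Bool → Set (Tr × Tr)) (p : Tr × Tr) (U : Tr) : Prop :=
  ∃ s : Str, s ∉ U ∧ DFPrefix c p s

/-- `p` directly forces `c ≠ d`: there are incomparable strings `s, t` such that
`p` directly forces `s ⊂ c` and `t ⊂ d`. -/
def DFNe (c d : ℕ → Bool → Set (Tr × Tr)) (p : Tr × Tr) : Prop :=
  ∃ s t : Str, ¬ s <+: t ∧ ¬ t <+: s ∧ DFPrefix c p s ∧ DFPrefix d p t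

/-- The action `σ·c` of a string on a real name. -/
def actName (σ : Str) (c : ℕ → Bool → Set (Tr × Tr)) : ℕ → Bool → Set (Tr × Tr) :=
  fun n i => if σ.getD n false = true then c n (!i) else c n i

/-- The name `π_left` of the left generic real. -/
def piLeft : ℕ → Bool → Set (Tr × Tr) := fun n i =>
  {p | ∃ s t : Str, s.length = n+1 ∧ t.length = n+1 ∧ s.getD n false = i ∧ p = (Tbr s, Tbr t)}

/-- The name `π_right` of the right generic real. -/
def piRight : ℕ → Bool → Set (Tr × Tr) := fun n i =>
  {p | ∃ s t : Str, s.length = n+1 ∧ t.length = n+1 ∧ t.getD n false = i ∧ p = (Tbr s, Tbr t)}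

/-!
Induction on `n`. For `n + 1`, first refine the half `T→0` to `Q₀`. The shift `x` carrying the
stem of `T→0` to that of `T→1` maps `T→0` onto `T→1`, so refining `x·Q₀` gives `Q₁ ⊆ T→1`
with `x·Q₁ ⊆_n Q₀`. As `x·Q₁` and `Q₁` have the same splitting pattern above their stems,
they glue over the stem of `T` to a large tree `Q` with `Q→0 = x·Q₁` and `Q→1 = Q₁`. The
pieces `Q→1s = Q₁→s` lie in `D` by construction, and `Q→0s ⊆ Q₀→s` lie in `D` because `D` is
open.
-/

theorem length_act (s t : Str) : (act s t).length = t.length := by simp [act]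

theorem getElem_act (s t : Str) (k : ℕ) (h : k < (act s t).length) :
    (act s t)[k] = Bool.xor (s.getD k false) (t[k]'(by simpa [length_act] using h)) := by
  simp [act]

theorem act_act (s t : Str) : act s (act s t) = t := by
  refine List.ext_getElem (by simp only [length_act]) fun k _ _ => ?_
  rw [getElem_act, getElem_act]
  cases s.getD k false <;> simp

theorem act_act_self {u v : Str} (h : u.length = v.length) : act (act u v) u = v := by
  refine List.ext_getElem (by simp only [length_act, h]) fun k hk _ => ?_
  have hku : k < u.length := by simpa [length_act] using hk
  rw [getElem_act, List.getD_eq_getElem _ _ (by simpa [length_act, h] using hku), getElem_act,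
    List.getD_eq_getElem _ _ hku]
  cases u[k] <;> simp

theorem act_append {s u : Str} (v : Str) (h : s.length ≤ u.length) :
    act s (u ++ v) = act s u ++ v := by
  refine List.ext_getElem (by simp [length_act]) fun k _ hk => ?_
  rw [getElem_act]
  rcases lt_or_ge k u.length with hku | hku
  · rw [List.getElem_append_left hku,
      List.getElem_append_left (by simpa [length_act] using hku), getElem_act]
  · rw [List.getElem_append_right hku,
      List.getElem_append_right (by simpa [length_act] using hku),
      List.getD_eq_default _ _ (h.trans hku)]
    simp [length_act]

theorem act_take (s t : Str) (m : ℕ) : act s (t.take m) = (act s t).take m := by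
  refine List.ext_getElem (by simp [length_act]) fun k hk _ => ?_
  simp only [getElem_act, List.getElem_take]

theorem act_prefix {a b : Str} (s : Str) (h : a <+: b) : act s a <+: act s b := by
  rw [List.prefix_iff_eq_take] at h ⊢
  rw [length_act, ← act_take, ← h]

theorem getElem?_eq_of_prefix_or_prefix {u v : Str} (h : u <+: v ∨ v <+: u) {k : ℕ}
    (hu : k < u.length) (hv : k < v.length) : u[k]? = v[k]? := by
  rw [List.getElem?_eq_getElem hu, List.getElem?_eq_getElem hv]
  rcases h with h | h
  · rw [h.getElem hu]
  · rw [h.getElem hv]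

theorem prefix_of_prefix_or_prefix_of_length_le {u v : Str} (h : u <+: v ∨ v <+: u)
    (hl : u.length ≤ v.length) : u <+: v := by
  rcases h with h | h
  · exact h
  · rw [h.eq_of_length_le hl]

def tailSeq (q : ℕ → Bool → Str) : ℕ → Bool → Str := fun k => q (k + 1)

def consSeq (c : Bool → Str) (q : ℕ → Bool → Str) : ℕ → Bool → Str
  | 0 => c
  | k + 1 => q k

def branchStr (q : ℕ → Bool → Str) (n : ℕ) (f : ℕ → Bool) : Str :=
  ((List.range (n + 1)).map fun k => q k (f k)).flatten

/-- The tree witnessed by `LTwit _ r q`. -/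
def largeTree (r : Str) (q : ℕ → Bool → Str) : Tr := {t | ∃ n f, t <+: r ++ branchStr q n f}

def IsSplitSeq (q : ℕ → Bool → Str) : Prop :=
  (∀ n, (q n true).length = (q n false).length ∧ 1 ≤ (q n false).length) ∧
  ∀ n i, (q n i).head? = some i

theorem ltwit_iff {T : Tr} {r : Str} {q : ℕ → Bool → Str} :
    LTwit T r q ↔ IsSplitSeq q ∧ T = largeTree r q := by
  rw [LTwit, IsSplitSeq, and_assoc]
  rfl

theorem isLT_iff {T : Tr} : IsLT T ↔ ∃ r q, IsSplitSeq q ∧ T = largeTree r q := by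
  simp only [IsLT, ltwit_iff]

theorem isLT_largeTree {q : ℕ → Bool → Str} (hq : IsSplitSeq q) (r : Str) :
    IsLT (largeTree r q) :=
  isLT_iff.2 ⟨r, q, hq, rfl⟩

namespace IsSplitSeq

variable {q : ℕ → Bool → Str}

theorem length_eq (hq : IsSplitSeq q) (n : ℕ) (i : Bool) :
    (q n i).length = (q n false).length := by
  cases i
  · rfl
  · exact (hq.1 n).1

theorem one_le_length (hq : IsSplitSeq q) (n : ℕ) (i : Bool) : 1 ≤ (q n i).length :=
  hq.length_eq n i ▸ (hq.1 n).2

theorem tailSeq (hq : IsSplitSeq q) : IsSplitSeq (tailSeq q) :=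
  ⟨fun n => hq.1 (n + 1), fun n => hq.2 (n + 1)⟩

theorem getElem?_append (hq : IsSplitSeq q) (r : Str) (n : ℕ) (i : Bool) :
    (r ++ q n i)[r.length]? = some i := by
  rw [List.getElem?_append_right le_rfl, Nat.sub_self, ← List.head?_eq_getElem?, hq.2]

theorem length_lt_append (hq : IsSplitSeq q) (r : Str) (n : ℕ) (i : Bool) :
    r.length < (r ++ q n i).length := by
  have := hq.one_le_length n i
  simp only [List.length_append]
  omega

end IsSplitSeq

theorem branchStr_zero (q : ℕ → Bool → Str) (f : ℕ → Bool) :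
    branchStr q 0 f = q 0 (f 0) := by
  simp [branchStr]

theorem branchStr_succ (q : ℕ → Bool → Str) (n : ℕ) (f : ℕ → Bool) :
    branchStr q (n + 1) f = q 0 (f 0) ++ branchStr (tailSeq q) n fun k => f (k + 1) := by
  simp only [branchStr, List.range_succ_eq_map, List.map_cons, List.flatten_cons, List.map_map]
  rfl

section largeTree

variable {r t : Str} {q : ℕ → Bool → Str}

theorem mem_largeTree_of_prefix (h : t <+: r) : t ∈ largeTree r q :=
  ⟨0, fun _ => false, h.trans (List.prefix_append _ _)⟩

theorem self_mem_largeTree (r : Str) (q : ℕ → Bool → Str) : r ∈ largeTree r q :=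
  mem_largeTree_of_prefix List.prefix_rfl

theorem prefix_or_prefix_of_mem_largeTree (h : t ∈ largeTree r q) : t <+: r ∨ r <+: t := by
  obtain ⟨n, f, h⟩ := h
  exact List.prefix_or_prefix_of_prefix h (List.prefix_append _ _)

theorem mem_largeTree_iff :
    t ∈ largeTree r q ↔ t <+: r ∨ ∃ i, t ∈ largeTree (r ++ q 0 i) (tailSeq q) := by
  constructor
  · rintro ⟨_ | n, f, h⟩
    · rw [branchStr_zero] at h
      exact Or.inr ⟨f 0, 0, fun _ => false, h.trans (List.prefix_append _ _)⟩
    · rw [branchStr_succ, ← List.append_assoc] at h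
      exact Or.inr ⟨f 0, n, fun k => f (k + 1), h⟩
  · rintro (h | ⟨i, n, f, h⟩)
    · exact mem_largeTree_of_prefix h
    · refine ⟨n + 1, fun k => Nat.casesOn k i f, ?_⟩
      rwa [branchStr_succ, ← List.append_assoc]

theorem largeTree_append_subset (i : Bool) :
    largeTree (r ++ q 0 i) (tailSeq q) ⊆ largeTree r q :=
  fun _ h => mem_largeTree_iff.2 (Or.inr ⟨i, h⟩)

theorem append_mem_largeTree (i : Bool) : r ++ q 0 i ∈ largeTree r q :=
  largeTree_append_subset i (self_mem_largeTree _ _)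

theorem getElem?_of_mem_largeTree_append (hq : IsSplitSeq q) {i : Bool}
    (h : t ∈ largeTree (r ++ q 0 i) (tailSeq q)) (hl : r.length < t.length) :
    t[r.length]? = some i := by
  rw [getElem?_eq_of_prefix_or_prefix (prefix_or_prefix_of_mem_largeTree h) hl
    (hq.length_lt_append r 0 i), hq.getElem?_append]

theorem length_le_of_forall_prefix_or_prefix (hq : IsSplitSeq q) {w : Str}
    (h : ∀ t ∈ largeTree r q, w <+: t ∨ t <+: w) : w.length ≤ r.length := by
  by_contra! hlt
  have hw (i : Bool) : w[r.length]? = some i := by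
    rw [getElem?_eq_of_prefix_or_prefix (h _ (append_mem_largeTree i)) hlt
      (hq.length_lt_append r 0 i), hq.getElem?_append]
  simpa using (hw false).symm.trans (hw true)

theorem stem_largeTree (hq : IsSplitSeq q) : stem (largeTree r q) = r := by
  have hres : restr (largeTree r q) r = largeTree r q :=
    Set.ext fun _ => ⟨And.left, fun ht => ⟨ht, (prefix_or_prefix_of_mem_largeTree ht).symm⟩⟩
  have hle (t : Str) (ht : restr (largeTree r q) t = largeTree r q) : t.length ≤ r.length :=
    length_le_of_forall_prefix_or_prefix hq fun u hu => (ht ▸ hu : u ∈ restr _ t).2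
  obtain ⟨hmem, hstem, hmax⟩ := Classical.epsilon_spec (p := fun s => s ∈ largeTree r q ∧
      restr (largeTree r q) s = largeTree r q ∧ ∀ t ∈ largeTree r q,
        restr (largeTree r q) t = largeTree r q → t.length ≤ s.length)
    ⟨r, self_mem_largeTree r q, hres, fun t _ ht => hle t ht⟩
  exact (prefix_of_prefix_or_prefix_of_length_le (prefix_or_prefix_of_mem_largeTree hmem)
    (hle _ hstem)).eq_of_length_le (hmax r (self_mem_largeTree r q) hres)

theorem restr_largeTree_append_singleton (hq : IsSplitSeq q) (i : Bool) :
    restr (largeTree r q) (r ++ [i]) = largeTree (r ++ q 0 i) (tailSeq q) := by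
  have hi : r ++ [i] <+: r ++ q 0 i :=
    (List.prefix_append_right_inj r).2 (List.singleton_prefix_iff_head?_eq_some.2 (hq.2 0 i))
  ext t
  constructor
  · rintro ⟨ht, hti⟩
    rcases mem_largeTree_iff.1 ht with htr | ⟨j, htj⟩
    · exact mem_largeTree_of_prefix (htr.trans (List.prefix_append _ _))
    rcases le_or_gt t.length r.length with hl | hl
    · exact mem_largeTree_of_prefix ((prefix_of_prefix_or_prefix_of_length_le
        (prefix_or_prefix_of_mem_largeTree ht) hl).trans (List.prefix_append _ _))
    have hji : some j = some i := by
      rw [← getElem?_of_mem_largeTree_append hq htj hl,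
        getElem?_eq_of_prefix_or_prefix hti.symm hl (by simp)]
      simp
    rwa [Option.some_inj.1 hji] at htj
  · intro ht
    refine ⟨largeTree_append_subset i ht, ?_⟩
    rcases prefix_or_prefix_of_mem_largeTree ht with h | h
    · exact List.prefix_or_prefix_of_prefix hi h
    · exact Or.inl (hi.trans h)

theorem split1_largeTree (hq : IsSplitSeq q) (i : Bool) :
    split1 (largeTree r q) i = largeTree (r ++ q 0 i) (tailSeq q) := by
  rw [split1, stem_largeTree hq, restr_largeTree_append_singleton hq]

theorem splN_append (hq : IsSplitSeq q) (r : Str) (i : Bool) :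
    ∀ k, splN (r ++ q 0 i) (tailSeq q) k = splN r q (k + 1)
  | 0 => by simp [splN, hq.length_eq 0 i]
  | k + 1 => congrArg (· + (q (k + 1) false).length) (splN_append hq r i k)

theorem splN_congr_length {a b : Str} (h : a.length = b.length) (q : ℕ → Bool → Str) :
    ∀ k, splN a q k = splN b q k
  | 0 => h
  | k + 1 => congrArg (· + (q k false).length) (splN_congr_length h q k)

theorem splN_eq_of_largeTree_eq {q' : ℕ → Bool → Str} (hq : IsSplitSeq q)
    (hq' : IsSplitSeq q') (h : largeTree r q = largeTree r q') (k : ℕ) :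
    splN r q k = splN r q' k := by
  induction k generalizing r q q' with
  | zero => rfl
  | succ k ih =>
    have hsplit : largeTree (r ++ q 0 false) (tailSeq q)
        = largeTree (r ++ q' 0 false) (tailSeq q') := by
      rw [← split1_largeTree hq, ← split1_largeTree hq', h]
    have hstem : r ++ q 0 false = r ++ q' 0 false := by
      rw [← stem_largeTree (r := r ++ q 0 false) hq.tailSeq, hsplit, stem_largeTree hq'.tailSeq]
    rw [hstem] at hsplit
    rw [← splN_append hq, ← splN_append hq', hstem, ih hq.tailSeq hq'.tailSeq hsplit]

theorem spl_largeTree (hq : IsSplitSeq q) (k : ℕ) : spl (largeTree r q) k = splN r q k := by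
  have hwit : LTwit (largeTree r q) (witness (largeTree r q)).1 (witness (largeTree r q)).2 :=
    Classical.epsilon_spec (p := fun rq : Str × (ℕ → Bool → Str) => LTwit _ rq.1 rq.2)
      ⟨(r, q), ltwit_iff.2 ⟨hq, rfl⟩⟩
  obtain ⟨hw, hT⟩ := ltwit_iff.1 hwit
  have hr : (witness (largeTree r q)).1 = r := by
    rw [← stem_largeTree (r := (witness _).1) hw, ← hT, stem_largeTree hq]
  rw [hr] at hT
  rw [spl, hr]
  exact (splN_eq_of_largeTree_eq hq hw hT k).symm

theorem actT_largeTree {x : Str} (h : x.length ≤ r.length) :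
    actT x (largeTree r q) = largeTree (act x r) q := by
  ext t
  constructor
  · rintro ⟨u, ⟨n, f, hu⟩, rfl⟩
    exact ⟨n, f, act_append _ h ▸ act_prefix x hu⟩
  · rintro ⟨n, f, ht⟩
    refine ⟨act x t, ⟨n, f, ?_⟩, act_act x t⟩
    have := act_prefix x ht
    rwa [act_append _ (by rwa [length_act]), act_act] at this

end largeTree

theorem actT_actT (x : Str) (S : Tr) : actT x (actT x S) = S := by
  simp [actT, Set.image_image, act_act]

theorem actT_mono {S T : Tr} (x : Str) (h : S ⊆ T) : actT x S ⊆ actT x T :=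
  Set.image_mono h

section IsLT

variable {S T : Tr} {x : Str}

theorem IsLT.split1 (hT : IsLT T) (i : Bool) : IsLT (split1 T i) := by
  obtain ⟨r, q, hq, rfl⟩ := isLT_iff.1 hT
  rw [split1_largeTree hq]
  exact isLT_largeTree hq.tailSeq _

theorem spl_zero (hT : IsLT T) : spl T 0 = (stem T).length := by
  obtain ⟨r, q, hq, rfl⟩ := isLT_iff.1 hT
  rw [spl_largeTree hq, stem_largeTree hq, splN]

theorem spl_split1 (hT : IsLT T) (i : Bool) (k : ℕ) : spl (split1 T i) k = spl T (k + 1) := by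
  obtain ⟨r, q, hq, rfl⟩ := isLT_iff.1 hT
  rw [split1_largeTree hq, spl_largeTree hq.tailSeq, spl_largeTree hq, splN_append hq]

theorem prefix_stem_split1 (hT : IsLT T) (i : Bool) : stem T ++ [i] <+: stem (split1 T i) := by
  obtain ⟨r, q, hq, rfl⟩ := isLT_iff.1 hT
  rw [split1_largeTree hq, stem_largeTree hq.tailSeq, stem_largeTree hq]
  exact (List.prefix_append_right_inj r).2
    (List.singleton_prefix_iff_head?_eq_some.2 (hq.2 0 i))

theorem length_stem_le_split1 (hT : IsLT T) (i : Bool) :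
    (stem T).length ≤ (stem (split1 T i)).length :=
  ((List.prefix_append _ _).trans (prefix_stem_split1 hT i)).length_le

/-- The two halves of a large tree differ only by a shift of their stems. -/
theorem actT_split1_false (hT : IsLT T) :
    actT (act (stem (split1 T false)) (stem (split1 T true))) (split1 T false)
      = split1 T true := by
  obtain ⟨r, q, hq, rfl⟩ := isLT_iff.1 hT
  simp only [split1_largeTree hq, stem_largeTree hq.tailSeq]
  have hlen : (r ++ q 0 false).length = (r ++ q 0 true).length := by
    simp [hq.length_eq 0 true]
  rw [actT_largeTree (by rw [length_act, hlen]), act_act_self hlen]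

theorem stem_actT (hT : IsLT T) (hx : x.length ≤ (stem T).length) :
    stem (actT x T) = act x (stem T) := by
  obtain ⟨r, q, hq, rfl⟩ := isLT_iff.1 hT
  rw [stem_largeTree hq] at hx ⊢
  rw [actT_largeTree hx, stem_largeTree hq]

theorem IsLT.actT (hT : IsLT T) (hx : x.length ≤ (stem T).length) : IsLT (actT x T) := by
  obtain ⟨r, q, hq, rfl⟩ := isLT_iff.1 hT
  rw [stem_largeTree hq] at hx
  rw [actT_largeTree hx]
  exact isLT_largeTree hq _

theorem spl_actT (hT : IsLT T) (hx : x.length ≤ (stem T).length) (k : ℕ) :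
    spl (actT x T) k = spl T k := by
  obtain ⟨r, q, hq, rfl⟩ := isLT_iff.1 hT
  rw [stem_largeTree hq] at hx
  rw [actT_largeTree hx, spl_largeTree hq, spl_largeTree hq,
    splN_congr_length (length_act x r)]

theorem split1_actT (hT : IsLT T) (hx : x.length ≤ (stem T).length) (i : Bool) :
    split1 (actT x T) i = actT x (split1 T i) := by
  obtain ⟨r, q, hq, rfl⟩ := isLT_iff.1 hT
  rw [stem_largeTree hq] at hx
  have hx' : x.length ≤ (r ++ q 0 i).length := hx.trans (by simp)
  rw [actT_largeTree hx, split1_largeTree hq, split1_largeTree hq, actT_largeTree hx',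
    act_append _ hx]

theorem splitS_actT (hT : IsLT T) (hx : x.length ≤ (stem T).length) (s : Str) :
    splitS (actT x T) s = actT x (splitS T s) := by
  induction s generalizing T with
  | nil => rfl
  | cons i s ih =>
    exact (congrArg (splitS · s) (split1_actT hT hx i)).trans
      (ih (hT.split1 i) (hx.trans (length_stem_le_split1 hT i)))

theorem stem_prefix_of_subset (hS : IsLT S) (hT : IsLT T) (h : S ⊆ T) : stem T <+: stem S := by
  obtain ⟨a, p, hp, rfl⟩ := isLT_iff.1 hS
  obtain ⟨b, q, hq, rfl⟩ := isLT_iff.1 hT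
  rw [stem_largeTree hp, stem_largeTree hq]
  refine prefix_of_prefix_or_prefix_of_length_le
    (prefix_or_prefix_of_mem_largeTree (h (self_mem_largeTree a p))).symm ?_
  exact length_le_of_forall_prefix_or_prefix hp fun t ht =>
    (prefix_or_prefix_of_mem_largeTree (h ht)).symm

theorem subset_of_split1_subset (hS : IsLT S) (hT : IsLT T) (hst : stem S = stem T)
    (h : ∀ i, split1 S i ⊆ split1 T i) : S ⊆ T := by
  obtain ⟨a, p, hp, rfl⟩ := isLT_iff.1 hS
  obtain ⟨b, q, hq, rfl⟩ := isLT_iff.1 hT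
  rw [stem_largeTree hp, stem_largeTree hq] at hst
  subst hst
  intro t ht
  rcases mem_largeTree_iff.1 ht with hta | ⟨i, hti⟩
  · exact mem_largeTree_of_prefix hta
  · rw [← split1_largeTree hp] at hti
    exact ((h i).trans (fun _ hu => hu.1)) hti

theorem subN.stem_eq {n : ℕ} (hS : IsLT S) (hT : IsLT T) (h : subN (n + 1) S T) :
    stem S = stem T :=
  ((stem_prefix_of_subset hS hT h.1).eq_of_length (by
    rw [← spl_zero hS, ← spl_zero hT, h.2 0 n.succ_pos])).symm

theorem subN.split1 {n : ℕ} (hS : IsLT S) (hT : IsLT T) (h : subN (n + 1) S T) (i : Bool) :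
    subN n (split1 S i) (split1 T i) := by
  refine ⟨fun t ht => ⟨h.1 ht.1, ?_⟩, fun k hk => ?_⟩
  · rw [← h.stem_eq hS hT]
    exact ht.2
  · rw [spl_split1 hS, spl_split1 hT, h.2 (k + 1) (by omega)]

theorem subN.trans {n : ℕ} {R : Tr} (h₁ : subN n R S) (h₂ : subN n S T) : subN n R T :=
  ⟨h₁.1.trans h₂.1, fun k hk => (h₁.2 k hk).trans (h₂.2 k hk)⟩

theorem subN.actT {n : ℕ} (hS : IsLT S) (hT : IsLT T) (hxS : x.length ≤ (stem S).length)
    (hxT : x.length ≤ (stem T).length) (h : subN n S T) : subN n (actT x S) (actT x T) :=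
  ⟨actT_mono x h.1, fun k hk => by rw [spl_actT hS hxS, spl_actT hT hxT, h.2 k hk]⟩

theorem splitS_subset_of_subN (hS : IsLT S) (hT : IsLT T) {s : Str} (h : subN s.length S T) :
    splitS S s ⊆ splitS T s := by
  induction s generalizing S T with
  | nil => exact h.1
  | cons i s ih => exact ih (hS.split1 i) (hT.split1 i) (h.split1 hS hT i)

end IsLT

theorem exists_split1_eq_actT {B : Tr} {x r : Str} (hB : IsLT B) (hx : x.length ≤ (stem B).length)
    (h0 : r ++ [false] <+: act x (stem B)) (h1 : r ++ [true] <+: stem B) :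
    ∃ Q, IsLT Q ∧ stem Q = r ∧ split1 Q false = actT x B ∧ split1 Q true = B := by
  obtain ⟨b, p, hp, rfl⟩ := isLT_iff.1 hB
  rw [stem_largeTree hp] at hx h0 h1
  have hdrop {i : Bool} {l : Str} (h : r ++ [i] <+: l) :
      r ++ l.drop r.length = l ∧ (l.drop r.length).head? = some i := by
    obtain ⟨u, rfl⟩ := h
    simp
  set c : Bool → Str := fun i => (bif i then b else act x b).drop r.length
  have hq : IsSplitSeq (consSeq c p) := by
    refine ⟨fun n => ?_, fun n i => ?_⟩ <;> rcases n with _ | n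
    · exact ⟨by simp [consSeq, c, length_act],
        List.length_pos_of_mem (List.mem_of_mem_head? (hdrop h0).2)⟩
    · exact hp.1 n
    · cases i
      exacts [(hdrop h0).2, (hdrop h1).2]
    · exact hp.2 n i
  refine ⟨largeTree r (consSeq c p), isLT_largeTree hq r, stem_largeTree hq, ?_, ?_⟩
  · rw [split1_largeTree hq, actT_largeTree hx]
    exact congrArg (largeTree · p) (hdrop h0).1
  · rw [split1_largeTree hq]
    exact congrArg (largeTree · p) (hdrop h1).1

section Collage

variable {P D : Set Tr} {n : ℕ} {T : Tr}

theorem forall_splitS_succ_iff {A : Set Tr} :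
    (∀ s : Str, s.length = n + 1 → splitS T s ∈ A) ↔
      ∀ i, ∀ s : Str, s.length = n → splitS (split1 T i) s ∈ A := by
  refine ⟨fun h i s hs => h (i :: s) (by simp [hs]), fun h s hs => ?_⟩
  rcases s with _ | ⟨i, s⟩
  · simp at hs
  · exact h i s (by simpa using hs)

theorem IsCollage.split1 (hT : IsCollage P (n + 1) T) (i : Bool) :
    IsCollage P n (split1 T i) :=
  ⟨hT.1.split1 i, forall_splitS_succ_iff.1 hT.2 i⟩

theorem IsCollage.actT (hP : IsLTF P) (hT : IsCollage P n T) {x : Str}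
    (hx : x.length ≤ (stem T).length) : IsCollage P n (actT x T) :=
  ⟨hT.1.actT hx, fun s hs => splitS_actT hT.1 hx s ▸ hP.2.2 _ (hT.2 s hs) x⟩

def DenseRefinement (P D : Set Tr) (n : ℕ) (Q T : Tr) : Prop :=
  IsCollage P n Q ∧ subN n Q T ∧ ∀ s : Str, s.length = n → splitS Q s ∈ D

theorem exists_denseRefinement_zero (hP : IsLTF P) (hD : OpenDense1 P D)
    (hT : IsCollage P 0 T) : ∃ Q, DenseRefinement P D 0 Q T := by
  have hTP : T ∈ P := hT.2 [] rfl
  obtain ⟨Q, hQD, hQT⟩ := hD.2.1 T hTP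
  refine ⟨Q, ⟨hP.1 Q (hD.1 hQD), ?_⟩, ⟨hQT, fun k hk => absurd hk k.not_lt_zero⟩, ?_⟩ <;>
    rintro s hs <;> rw [List.length_eq_zero_iff.1 hs]
  exacts [hD.1 hQD, hQD]

theorem DenseRefinement.of_subN {Q Q' : Tr} (hD : OpenDense1 P D)
    (hQT : DenseRefinement P D n Q T) (hQ' : IsCollage P n Q') (h : subN n Q' Q) :
    DenseRefinement P D n Q' T :=
  ⟨hQ', h.trans hQT.2.1, fun s hs => hD.2.2 _ (hQ'.2 s hs) _ (hQT.2.2 s hs)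
    (splitS_subset_of_subN hQ'.1 hQT.1.1 (hs ▸ h))⟩

theorem DenseRefinement.of_split1 {Q : Tr} (hQ : IsLT Q) (hT : IsLT T) (hstem : stem Q = stem T)
    (h : ∀ i, DenseRefinement P D n (split1 Q i) (split1 T i)) :
    DenseRefinement P D (n + 1) Q T := by
  refine ⟨⟨hQ, forall_splitS_succ_iff.2 fun i => (h i).1.2⟩, ⟨?_, fun k hk => ?_⟩,
    forall_splitS_succ_iff.2 fun i => (h i).2.2⟩
  · exact subset_of_split1_subset hQ hT hstem fun i => (h i).2.1.1
  · rcases k with _ | k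
    · rw [spl_zero hQ, spl_zero hT, hstem]
    · rw [← spl_split1 hQ false, ← spl_split1 hT false, (h false).2.1.2 k (by omega)]

theorem exists_denseRefinement_succ (hP : IsLTF P) (hD : OpenDense1 P D)
    (ih : ∀ T, IsCollage P n T → ∃ Q, DenseRefinement P D n Q T)
    (hT : IsCollage P (n + 1) T) : ∃ Q, DenseRefinement P D (n + 1) Q T := by
  have hLT := hT.1
  obtain ⟨Q₀, hQ₀T⟩ := ih _ (hT.split1 false)
  have hQ₀ := hQ₀T.1.1
  set a₀ := stem (split1 T false)
  set a₁ := stem (split1 T true)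
  set x := act a₀ a₁
  have hlen : a₀.length = a₁.length := by
    rw [← spl_zero (hLT.split1 true), ← spl_zero (hLT.split1 false), spl_split1 hLT,
      spl_split1 hLT]
  have hxa₀ : x.length ≤ a₀.length := (length_act a₀ a₁).trans hlen.symm |>.le
  have hxQ₀ : x.length ≤ (stem Q₀).length :=
    hxa₀.trans (stem_prefix_of_subset hQ₀ (hLT.split1 false) hQ₀T.2.1.1).length_le
  obtain ⟨Q₁, hQ₁, hQ₁Q₀, hQ₁D⟩ := ih _ (hQ₀T.1.actT hP hxQ₀)
  have hQ₁T : subN n Q₁ (split1 T true) := actT_split1_false hLT ▸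
    hQ₁Q₀.trans (hQ₀T.2.1.actT hQ₀ (hLT.split1 false) hxQ₀ hxa₀)
  have ha₁ : a₁ <+: stem Q₁ := stem_prefix_of_subset hQ₁.1 (hLT.split1 true) hQ₁T.1
  have hxQ₁ : x.length ≤ (stem Q₁).length := length_act a₀ a₁ ▸ ha₁.length_le
  have hback : subN n (actT x Q₁) Q₀ := by
    simpa only [actT_actT] using hQ₁Q₀.actT hQ₁.1 (hQ₀.actT hxQ₀) hxQ₁
      (by rwa [stem_actT hQ₀ hxQ₀, length_act x (stem Q₀)])
  have hxa₁ : act x a₁ = a₀ := by rw [← act_act_self hlen, act_act]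
  have h0 : stem T ++ [false] <+: act x (stem Q₁) :=
    (prefix_stem_split1 hLT false).trans (by simpa only [hxa₁] using act_prefix x ha₁)
  obtain ⟨Q, hQ, hQstem, hQ0, hQ1⟩ := exists_split1_eq_actT hQ₁.1 hxQ₁ h0
    ((prefix_stem_split1 hLT true).trans ha₁)
  refine ⟨Q, DenseRefinement.of_split1 hQ hLT hQstem fun i => ?_⟩
  cases i
  · exact hQ0 ▸ hQ₀T.of_subN hD (hQ₁.actT hP hxQ₁) hback
  · exact hQ1 ▸ ⟨hQ₁, hQ₁T, hQ₁D⟩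

end Collage

/-- Lemma `stf`(2c): if `P` is a large-tree forcing notion, `T` an
`n`-collage over `P`, and `D ⊆ P` open dense in `P`, then there is an `n`-collage `Q`
over `P` with `Q ⊆_n T` and `Q→s ∈ D` for every `s ∈ 2^n`. -/
theorem stmt14 (P : Set Tr) (hP : IsLTF P) (n : ℕ) (T : Tr) (hT : IsCollage P n T)
    (D : Set Tr) (hD : OpenDense1 P D) :
    ∃ Q : Tr, IsCollage P n Q ∧ subN n Q T ∧
      ∀ s : Str, s.length = n → splitS Q s ∈ D := by
  induction n generalizing T with
  | zero => exact exists_denseRefinement_zero hP hD hT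
  | succ n ih => exact exists_denseRefinement_succ hP hD ih hT

end E0L
end

section
/- Let P be a large-tree forcing notion, S ∈ P, ⟨R,R'⟩ ∈ P×_{E0}P, and let c be a P×_{E0}P-real name. Then there exist a tree S' ∈ P with S' ⊆ S and a condition ⟨T,T'⟩ ∈ P×_{E0}P with ⟨T,T'⟩ ≤ ⟨R,R'⟩ such that ⟨T,T'⟩ directly forces c ∉ [S']. -/
namespace E0L

/-!
Let `r` be the stem of `S` and `m = |r|`. Strengthen `⟨R,R'⟩` to a condition that directly
forces `s ⊂ c` for some `s` of length `m + 1`, and take `S' = S↾u` with `u = r⌢(1 - s(m))`.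
Every string of `S'` of length `m + 1` equals `u`, which differs from `s` at `m`, so `s ∉ S'`.
-/

theorem pleq.trans {p q r : Tr × Tr} (h₁ : pleq p q) (h₂ : pleq q r) : pleq p r :=
  ⟨h₁.1.trans h₂.1, h₁.2.trans h₂.2⟩

theorem DFVal.mono {c : ℕ → Bool → Set (Tr × Tr)} {p q : Tr × Tr} {n : ℕ} {i : Bool}
    (h : DFVal c q n i) (hpq : pleq p q) : DFVal c p n i :=
  h.imp fun _ ⟨hw, hqw⟩ => ⟨hw, hpq.trans hqw⟩

theorem DFPrefix.mono {c : ℕ → Bool → Set (Tr × Tr)} {p q : Tr × Tr} {s : Str}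
    (h : DFPrefix c q s) (hpq : pleq p q) : DFPrefix c p s :=
  fun k hk => (h k hk).mono hpq

theorem DFPrefix.append_singleton {c : ℕ → Bool → Set (Tr × Tr)} {p : Tr × Tr} {s : Str}
    {i : Bool} (hs : DFPrefix c p s) (hi : DFVal c p s.length i) : DFPrefix c p (s ++ [i]) := by
  intro k hk
  rw [List.length_append, List.length_singleton] at hk
  rcases Nat.lt_or_ge k s.length with hks | hks
  · rw [List.getD_append _ _ _ _ hks]
    exact hs k hks
  · obtain rfl : k = s.length := by omega
    simpa using hi

theorem IsRealName.exists_dfVal {P : Set Tr} {c : ℕ → Bool → Set (Tr × Tr)}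
    (hc : IsRealName P c) (n : ℕ) {p : Tr × Tr} (hp : CondPair P p) :
    ∃ p', CondPair P p' ∧ pleq p' p ∧ ∃ i, DFVal c p' n i := by
  obtain ⟨q, hq, r, hr, hrp, hrq⟩ := hc.2.1 n p hp
  refine ⟨r, hr, hrp, ?_⟩
  rcases hq with hq | hq
  exacts [⟨false, q, hq, hrq⟩, ⟨true, q, hq, hrq⟩]

theorem IsRealName.exists_dfPrefix {P : Set Tr} {c : ℕ → Bool → Set (Tr × Tr)}
    (hc : IsRealName P c) (n : ℕ) {p : Tr × Tr} (hp : CondPair P p) :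
    ∃ p', CondPair P p' ∧ pleq p' p ∧ ∃ s : Str, s.length = n ∧ DFPrefix c p' s := by
  induction n with
  | zero =>
    exact ⟨p, hp, ⟨subset_rfl, subset_rfl⟩, [], rfl, fun k hk => absurd hk (Nat.not_lt_zero k)⟩
  | succ n ih =>
    obtain ⟨p₁, hp₁, hp₁p, s, rfl, hs⟩ := ih
    obtain ⟨p₂, hp₂, hp₂p₁, i, hi⟩ := hc.exists_dfVal s.length hp₁
    exact ⟨p₂, hp₂, hp₂p₁.trans hp₁p, s ++ [i], by simp, (hs.mono hp₂p₁).append_singleton hi⟩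

theorem LTwit.append_singleton_mem {T : Tr} {r : Str} {q : ℕ → Bool → Str} (h : LTwit T r q)
    (i : Bool) : r ++ [i] ∈ T := by
  obtain ⟨-, hhead, rfl⟩ := h
  obtain ⟨t, ht⟩ := List.head?_eq_some_iff.mp (hhead 0 i)
  exact ⟨0, fun _ => i, t, by simp [ht]⟩

theorem not_mem_restr_of_length_eq {T : Tr} {s u : Str} (hlen : s.length = u.length)
    (hne : s ≠ u) : s ∉ restr T u := fun hs =>
  hne <| hs.2.elim (fun h => (h.eq_of_length hlen.symm).symm) (fun h => h.eq_of_length hlen)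

/-- Lemma `K1`: if `P` is a large-tree forcing notion, `S ∈ P`,
`⟨R,R'⟩ ∈ P ×_{E0} P`, and `c` is a `P ×_{E0} P`-real name, then there are `S' ∈ P`,
`S' ⊆ S`, and `⟨T,T'⟩ ∈ P ×_{E0} P`, `⟨T,T'⟩ ≤ ⟨R,R'⟩`, such that `⟨T,T'⟩` directly
forces `c ∉ [S']`. -/
theorem stmt18 (P : Set Tr) (hP : IsLTF P) (S : Tr) (hS : S ∈ P)
    (R R' : Tr) (hRR' : CondPair P (R, R'))
    (c : ℕ → Bool → Set (Tr × Tr)) (hc : IsRealName P c) :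
    ∃ S' ∈ P, S' ⊆ S ∧ ∃ T T' : Tr, CondPair P (T, T') ∧
      pleq (T, T') (R, R') ∧ DFAvoid c (T, T') S' := by
  obtain ⟨r, q, hrq⟩ := hP.1 S hS
  obtain ⟨⟨T, T'⟩, hTT', hle, s, hslen, hs⟩ := hc.exists_dfPrefix (r.length + 1) hRR'
  set u := r ++ [!s.getD r.length false]
  have hsu : s ≠ u := fun h => by
    simpa [u] using congrArg (·.getD r.length false) h
  refine ⟨restr S u, hP.2.1 S hS u (hrq.append_singleton_mem _), fun _ ht => ht.1,
    T, T', hTT', hle, s, not_mem_restr_of_length_eq (by simp [u, hslen]) hsu, hs⟩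

end E0L
end
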